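/- For all m, n ≥ 5: (1) there exist two-sided ideals L' and L with quotient complexities m and n, with Σ_{L'} \ Σ_L ≠ ∅ and Σ_L \ Σ_{L'} ≠ ∅, such that κ(L' ∪ L) = (m+1)(n+1) and κ(L' ⊕ L) = (m+1)(n+1); (2) there exist two-sided ideals L' and L with quotient complexities m and n, with Σ_{L'} \ Σ_L ≠ ∅, such that κ(L' \ L) = m·n + m; and (3) there exist two-sided ideals L' and L with quotient complexities m and n such that κ(L' ∩ L) = m·n. (Thus the unrestricted complexities of boolean operations on two-sided ideals equal those on arbitrary regular languages.) -/

import Mathlib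

/-- The alphabet of a language: letters occurring in some word of `L`. -/
def alphabetOf {α : Type*} (L : Language α) : Set α :=
  {a | ∃ u v : List α, u ++ [a] ++ v ∈ L}

/-- The left quotient of `L` by a word `w`. -/
def leftQuotient {α : Type*} (L : Language α) (w : List α) : Language α :=
  {x | w ++ x ∈ L}

/-- The set of left quotients of `L` by words over the alphabet of `L`. -/
def quotientSet {α : Type*} (L : Language α) : Set (Language α) :=
  {K | ∃ w : List α, (∀ a ∈ w, a ∈ alphabetOf L) ∧ K = leftQuotient L w}

/-- `L` is regular with quotient complexity `m`: the set of its left quotients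
(by words over its own alphabet) is finite of cardinality exactly `m`. -/
def HasComplexity {α : Type*} (L : Language α) (m : ℕ) : Prop :=
  (quotientSet L).Finite ∧ (quotientSet L).ncard = m

/-- All words whose letters lie in `S`. -/
def starOf {α : Type*} (S : Set α) : Language α :=
  {w | ∀ a ∈ w, a ∈ S}

/-- A nonempty language `L` is a right ideal if `L · Σ_L^* = L`. -/
def IsRightIdeal {α : Type*} (L : Language α) : Prop :=
  (∃ w, w ∈ L) ∧ L * starOf (alphabetOf L) = L

/-- A nonempty language `L` is a left ideal if `Σ_L^* · L = L`. -/
def IsLeftIdeal {α : Type*} (L : Language α) : Prop :=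
  (∃ w, w ∈ L) ∧ starOf (alphabetOf L) * L = L

/-- A nonempty language `L` is a two-sided ideal if `Σ_L^* · L · Σ_L^* = L`. -/
def IsTwoSidedIdeal {α : Type*} (L : Language α) : Prop :=
  (∃ w, w ∈ L) ∧ starOf (alphabetOf L) * L * starOf (alphabetOf L) = L

/-! The witnesses are the languages `countLang S a k` of words over `S` with at least `k` letters
`a`. Such a language is a two-sided ideal over `S`, and its quotients are `countLang S a j` for
`j ≤ k`, together with the empty language (index `⊤`) once a word leaves `S`. A quotient of a
boolean combination of two of them is the same combination of their quotients, hence indexed by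
a pair of indices; when the two languages count different letters `a ≠ b` every pair allowed by
the alphabets is reached. Test words `a^t c` and `b^t d`, with `c` and `d` private to one of the
alphabets, separate the pairs, which gives `(m+1)(n+1)` quotients for union and symmetric
difference, `m(n+1)` for difference and `mn` for intersection. -/

section Alphabet

variable {α : Type*} {S : Set α} {L : Language α} {w u v : List α}

theorem mem_starOf : w ∈ starOf S ↔ ∀ x ∈ w, x ∈ S := Iff.rfl

theorem append_mem_starOf : u ++ v ∈ starOf S ↔ u ∈ starOf S ∧ v ∈ starOf S :=
  List.forall_mem_append

theorem replicate_mem_starOf {a : α} (ha : a ∈ S) (n : ℕ) : List.replicate n a ∈ starOf S :=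
  fun _ hx => List.eq_of_mem_replicate hx ▸ ha

theorem mem_leftQuotient : u ∈ leftQuotient L w ↔ w ++ u ∈ L := Iff.rfl

theorem mem_alphabetOf_of_mem {x : α} (hw : w ∈ L) (hx : x ∈ w) : x ∈ alphabetOf L := by
  obtain ⟨u, v, rfl⟩ := List.append_of_mem hx
  exact ⟨u, v, by simpa using hw⟩

theorem alphabetOf_eq_of_forall (hL : ∀ w ∈ L, w ∈ starOf S)
    (hS : ∀ x ∈ S, ∃ w ∈ L, x ∈ w) : alphabetOf L = S := by
  refine Set.Subset.antisymm ?_ fun x hx => ?_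
  · rintro x ⟨u, v, huv⟩
    exact hL _ huv x (by simp)
  · obtain ⟨w, hw, hxw⟩ := hS x hx
    exact mem_alphabetOf_of_mem hw hxw

theorem hasComplexity_of_leftQuotient_eq {σ : Type*} (f : List α → σ) (G : σ → Language α)
    (hL : ∀ w ∈ starOf (alphabetOf L), leftQuotient L w = G (f w))
    (hfin : (f '' {w | w ∈ starOf (alphabetOf L)}).Finite)
    (hG : (f '' {w | w ∈ starOf (alphabetOf L)}).InjOn G) :
    HasComplexity L (f '' {w | w ∈ starOf (alphabetOf L)}).ncard := by
  have hQ : quotientSet L = G '' (f '' {w | w ∈ starOf (alphabetOf L)}) := by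
    ext K
    rw [Set.image_image]
    constructor
    · rintro ⟨w, hw, rfl⟩
      exact ⟨w, hw, (hL w hw).symm⟩
    · rintro ⟨w, hw, rfl⟩
      exact ⟨w, hw, (hL w hw).symm⟩
  rw [HasComplexity, hQ]
  exact ⟨hfin.image G, hG.ncard_image⟩

end Alphabet

namespace ENat

theorem eq_of_forall_le_natCast_iff {r r' : ℕ∞} (h : ∀ t : ℕ, r ≤ t ↔ r' ≤ t) : r = r' := by
  have key : ∀ {r r' : ℕ∞}, (∀ t : ℕ, r ≤ t ↔ r' ≤ t) → r ≤ r' := fun {r r'} h => by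
    induction r' using ENat.recTopCoe with
    | top => exact le_top
    | coe n => exact (h n).2 le_rfl
  exact le_antisymm (key h) (key fun t => (h t).symm)

theorem ncard_natCast_Iic (k : ℕ) : (Nat.cast '' Set.Iic k : Set ℕ∞).ncard = k + 1 := by
  rw [Set.ncard_image_of_injective _ Nat.cast_injective, Set.ncard_Iic_nat]

theorem ncard_insert_top_natCast_Iic (k : ℕ) :
    (insert ⊤ (Nat.cast '' Set.Iic k : Set ℕ∞)).ncard = k + 2 := by
  rw [Set.ncard_insert_of_notMem (by simp) ((Set.finite_Iic k).image _), ncard_natCast_Iic]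

end ENat

section CountLang

variable {α : Type*} [DecidableEq α] {R S S' T A : Set α} {a b c d : α} {k : ℕ∞}
  {w u v : List α}

def countLang (S : Set α) (a : α) (k : ℕ∞) : Language α :=
  {w | w ∈ starOf S ∧ k ≤ w.count a}

open Classical in
noncomputable def countState (S : Set α) (a : α) (k : ℕ∞) (w : List α) : ℕ∞ :=
  if w ∈ starOf S then k - w.count a else ⊤

theorem mem_countLang : w ∈ countLang S a k ↔ w ∈ starOf S ∧ k ≤ w.count a := Iff.rfl

theorem mem_countLang_iff (hw : w ∈ starOf S) : w ∈ countLang S a k ↔ k ≤ w.count a :=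
  and_iff_right hw

theorem notMem_countLang {x : α} (hx : x ∈ w) (hxS : x ∉ S) : w ∉ countLang S a k :=
  fun hw => hxS (hw.1 x hx)

theorem replicate_append_mem_countLang (ha : a ∈ S) (hu : u ∈ starOf S) (k : ℕ) :
    List.replicate k a ++ u ∈ countLang S a k := by
  refine ⟨append_mem_starOf.2 ⟨replicate_mem_starOf ha k, hu⟩, ?_⟩
  simp [List.count_append]

theorem replicate_append_mem_countLang_iff (ha : a ∈ S) (hu : u ∈ starOf S) (hau : a ∉ u)
    {t : ℕ} : List.replicate t a ++ u ∈ countLang S a k ↔ k ≤ t := by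
  rw [mem_countLang_iff (append_mem_starOf.2 ⟨replicate_mem_starOf ha t, hu⟩),
    List.count_append, List.count_replicate_self, List.count_eq_zero_of_not_mem hau, add_zero]

theorem countLang_injective (ha : a ∈ S) : Function.Injective (countLang S a) := by
  intro r r' h
  refine ENat.eq_of_forall_le_natCast_iff fun t => ?_
  have hmem : ∀ r, List.replicate t a ∈ countLang S a r ↔ r ≤ t := fun r => by
    rw [mem_countLang_iff (replicate_mem_starOf ha t), List.count_replicate_self]
  rw [← hmem, ← hmem, h]

theorem alphabetOf_countLang (ha : a ∈ S) (k : ℕ) : alphabetOf (countLang S a k) = S :=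
  alphabetOf_eq_of_forall (fun _ hw => hw.1) fun x hx =>
    ⟨List.replicate k a ++ [x],
      replicate_append_mem_countLang ha (by simpa [mem_starOf]) k, by simp⟩

theorem isTwoSidedIdeal_countLang (ha : a ∈ S) (k : ℕ) : IsTwoSidedIdeal (countLang S a k) := by
  refine ⟨⟨List.replicate k a, replicate_mem_starOf ha k, by simp⟩, ?_⟩
  rw [alphabetOf_countLang ha]
  ext w
  simp only [Language.mem_mul]
  constructor
  · rintro ⟨_, ⟨u, hu, v, hv, rfl⟩, z, hz, rfl⟩
    refine ⟨append_mem_starOf.2 ⟨append_mem_starOf.2 ⟨hu, hv.1⟩, hz⟩, ?_⟩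
    simp only [List.count_append, Nat.cast_add]
    exact le_add_right (le_add_left hv.2)
  · intro hw
    exact ⟨w, ⟨[], fun _ h => by simp at h, w, hw, rfl⟩, [], fun _ h => by simp at h,
      List.append_nil w⟩

theorem countState_of_mem (hw : w ∈ starOf S) : countState S a k w = k - w.count a := if_pos hw

theorem countState_of_notMem (hw : w ∉ starOf S) : countState S a k w = ⊤ := if_neg hw

theorem countState_top : countState S a ⊤ w = ⊤ := by
  unfold countState
  split_ifs <;> simp [ENat.top_sub_natCast]

theorem countState_append :
    countState S a k (u ++ v) = countState S a (countState S a k u) v := by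
  by_cases hu : u ∈ starOf S
  · by_cases hv : v ∈ starOf S
    · rw [countState_of_mem (append_mem_starOf.2 ⟨hu, hv⟩), countState_of_mem hu,
        countState_of_mem hv, List.count_append, Nat.cast_add, tsub_tsub]
    · rw [countState_of_notMem fun h => hv (append_mem_starOf.1 h).2, countState_of_notMem hv]
  · rw [countState_of_notMem fun h => hu (append_mem_starOf.1 h).1, countState_of_notMem hu,
      countState_top]

theorem countState_eq_self_of_notMem (hv : v ∈ starOf S) (hav : a ∉ v) :
    countState S a k v = k := by
  rw [countState_of_mem hv, List.count_eq_zero_of_not_mem hav, Nat.cast_zero, tsub_zero]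

theorem countState_filter {p : α → Bool} (hpa : p a) (hp : ∀ x ∉ S, p x) :
    countState S a k (w.filter p) = countState S a k w := by
  have hstar : w.filter p ∈ starOf S ↔ w ∈ starOf S :=
    ⟨fun h x hx => by_contra fun hxS => hxS (h x (List.mem_filter.2 ⟨hx, hp x hxS⟩)),
      fun h x hx => h x (List.mem_filter.1 hx).1⟩
  by_cases hw : w ∈ starOf S
  · rw [countState_of_mem (hstar.2 hw), countState_of_mem hw, List.count_filter hpa]
  · rw [countState_of_notMem (mt hstar.1 hw), countState_of_notMem hw]

theorem leftQuotient_countLang :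
    leftQuotient (countLang S a k) w = countLang S a (countState S a k w) := by
  ext x
  rw [mem_leftQuotient, mem_countLang, mem_countLang, append_mem_starOf]
  by_cases hw : w ∈ starOf S
  · rw [countState_of_mem hw, List.count_append, Nat.cast_add, tsub_le_iff_left]
    simp [hw]
  · simp [countState_of_notMem hw, hw]

theorem countState_mem_insert_top (k : ℕ) (w : List α) :
    countState S a k w ∈ insert ⊤ (Nat.cast '' Set.Iic k : Set ℕ∞) := by
  by_cases hw : w ∈ starOf S
  · rw [countState_of_mem hw]
    exact Or.inr ⟨k - w.count a, Nat.sub_le _ _, ENat.natCast_sub _ _⟩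
  · exact Or.inl (countState_of_notMem hw)

theorem finite_image_countState (k : ℕ) (W : Set (List α)) : (countState S a k '' W).Finite :=
  (((Set.finite_Iic k).image _).insert ⊤).subset fun _ ⟨w, _, hw⟩ =>
    hw ▸ countState_mem_insert_top k w

theorem natCast_Iic_subset_image_countState (haA : a ∈ A) (haS : a ∈ S) (k : ℕ) :
    (Nat.cast '' Set.Iic k : Set ℕ∞) ⊆ countState S a k '' {w | w ∈ starOf A} := by
  rintro _ ⟨i, hi, rfl⟩
  refine ⟨List.replicate (k - i) a, replicate_mem_starOf haA _, ?_⟩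
  rw [countState_of_mem (replicate_mem_starOf haS _), List.count_replicate_self,
    ← ENat.natCast_sub, Nat.sub_sub_self hi]

theorem image_countState_of_subset (haA : a ∈ A) (hAS : A ⊆ S) (k : ℕ) :
    countState S a k '' {w | w ∈ starOf A} = Nat.cast '' Set.Iic k := by
  refine Set.Subset.antisymm ?_ (natCast_Iic_subset_image_countState haA (hAS haA) k)
  rintro _ ⟨w, hw, rfl⟩
  rw [countState_of_mem fun x hx => hAS (hw x hx)]
  exact ⟨k - w.count a, Nat.sub_le _ _, ENat.natCast_sub _ _⟩

theorem image_countState_of_not_subset (haA : a ∈ A) (haS : a ∈ S) (hAS : ¬A ⊆ S) (k : ℕ) :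
    countState S a k '' {w | w ∈ starOf A} = insert ⊤ (Nat.cast '' Set.Iic k) := by
  obtain ⟨x, hxA, hxS⟩ := Set.not_subset.1 hAS
  refine Set.Subset.antisymm (fun _ ⟨w, _, hw⟩ => hw ▸ countState_mem_insert_top k w)
    (Set.insert_subset ⟨[x], by simpa [mem_starOf], countState_of_notMem (by simpa [mem_starOf])⟩
      (natCast_Iic_subset_image_countState haA haS k))

theorem hasComplexity_countLang (ha : a ∈ S) (k : ℕ) :
    HasComplexity (countLang S a k) (k + 1) := by
  have h := hasComplexity_of_leftQuotient_eq (countState S a k) (countLang S a)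
    (fun _ _ => leftQuotient_countLang) (finite_image_countState k _)
    (countLang_injective ha).injOn
  rwa [alphabetOf_countLang ha, image_countState_of_subset ha subset_rfl,
    ENat.ncard_natCast_Iic] at h

theorem exists_mem_starOf_countState_eq (hcR : c ∈ R) (hdT : d ∈ T) (hcd : c ≠ d)
    (hu : u ∈ starOf (T ∪ R)) :
    ∃ u' ∈ starOf R, d ∉ u' ∧ ∀ k, countState T c k u' = countState T c k u := by
  classical
  refine ⟨u.filter fun x => x = c ∨ x ∉ T, fun x hx => ?_, fun hd => ?_, fun k => ?_⟩
  · obtain ⟨hxu, hx⟩ := List.mem_filter.1 hx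
    rcases of_decide_eq_true hx with rfl | hxT
    exacts [hcR, (hu x hxu).resolve_left hxT]
  · rcases of_decide_eq_true (List.mem_filter.1 hd).2 with h | h
    exacts [hcd h.symm, h hdT]
  · exact countState_filter (by simp) fun x hx => by simp [hx]

theorem image_countState_pair (haS : a ∈ S) (hbS' : b ∈ S') (hab : a ≠ b) (k₁ k₂ : ℕ∞) :
    (fun w => (countState S' a k₁ w, countState S b k₂ w)) '' {w | w ∈ starOf (S' ∪ S)} =
      (countState S' a k₁ '' {w | w ∈ starOf (S' ∪ S)}) ×ˢ
        (countState S b k₂ '' {w | w ∈ starOf (S' ∪ S)}) := by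
  refine Set.Subset.antisymm (fun _ ⟨w, hw, e⟩ => e ▸ ⟨⟨w, hw, rfl⟩, w, hw, rfl⟩) ?_
  rintro ⟨_, _⟩ ⟨⟨u, hu, rfl⟩, v, hv, rfl⟩
  obtain ⟨u', hu'S, hbu', hu'⟩ := exists_mem_starOf_countState_eq haS hbS' hab hu
  obtain ⟨v', hv'S', hav', hv'⟩ := exists_mem_starOf_countState_eq hbS' haS hab.symm
    (Set.union_comm S' S ▸ hv)
  refine ⟨u' ++ v', append_mem_starOf.2 ⟨fun x hx => Or.inr (hu'S x hx),
    fun x hx => Or.inl (hv'S' x hx)⟩, ?_⟩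
  dsimp only
  rw [countState_append, countState_append, countState_eq_self_of_notMem hv'S' hav', hu',
    countState_eq_self_of_notMem hu'S hbu', hv']

theorem hasComplexity_op_countLang {op : Language α → Language α → Language α}
    (hop : ∀ X Y w, leftQuotient (op X Y) w = op (leftQuotient X w) (leftQuotient Y w))
    (haS : a ∈ S) (hbS' : b ∈ S') (hab : a ≠ b) (k₁ k₂ : ℕ)
    (hA : alphabetOf (op (countLang S' a k₁) (countLang S b k₂)) = S' ∪ S)
    (hinj : ((countState S' a k₁ '' {w | w ∈ starOf (S' ∪ S)}) ×ˢ
      (countState S b k₂ '' {w | w ∈ starOf (S' ∪ S)})).InjOn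
        fun p => op (countLang S' a p.1) (countLang S b p.2)) :
    HasComplexity (op (countLang S' a k₁) (countLang S b k₂))
      ((countState S' a k₁ '' {w | w ∈ starOf (S' ∪ S)}).ncard *
        (countState S b k₂ '' {w | w ∈ starOf (S' ∪ S)}).ncard) := by
  have h := hasComplexity_of_leftQuotient_eq (L := op (countLang S' a k₁) (countLang S b k₂))
    (fun w => (countState S' a k₁ w, countState S b k₂ w))
    (fun p => op (countLang S' a p.1) (countLang S b p.2))
    (fun w _ => by rw [hop, leftQuotient_countLang, leftQuotient_countLang])
  rw [hA, image_countState_pair haS hbS' hab, Set.ncard_prod] at h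
  exact h ((finite_image_countState k₁ _).prod (finite_image_countState k₂ _)) hinj

theorem hasComplexity_countLang_of_sup_like {op : Language α → Language α → Language α}
    (hop : ∀ X Y w, leftQuotient (op X Y) w = op (leftQuotient X w) (leftQuotient Y w))
    (hle : ∀ X Y, op X Y ≤ X ⊔ Y)
    (hleft : ∀ X Y w, w ∉ Y → (w ∈ op X Y ↔ w ∈ X))
    (hright : ∀ X Y w, w ∉ X → (w ∈ op X Y ↔ w ∈ Y))
    (ha : a ∈ S' ∩ S) (hb : b ∈ S' ∩ S) (hab : a ≠ b) (hc : c ∈ S' \ S) (hd : d ∈ S \ S')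
    (k₁ k₂ : ℕ) :
    HasComplexity (op (countLang S' a k₁) (countLang S b k₂)) ((k₁ + 2) * (k₂ + 2)) := by
  have hcL : ∀ {w : List α} {s}, c ∈ w → w ∉ countLang S b s :=
    fun h => notMem_countLang h hc.2
  have hdL' : ∀ {w : List α} {r}, d ∈ w → w ∉ countLang S' a r :=
    fun h => notMem_countLang h hd.2
  have hA : alphabetOf (op (countLang S' a k₁) (countLang S b k₂)) = S' ∪ S := by
    refine alphabetOf_eq_of_forall (fun w hw => ?_) fun x hx => ?_
    · rcases hle _ _ hw with hw | hw
      exacts [fun x hx => Or.inl (hw.1 x hx), fun x hx => Or.inr (hw.1 x hx)]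
    · rcases hx with hx | hx
      · refine ⟨List.replicate k₁ a ++ [x, c], (hleft _ _ _ (hcL (by simp))).2 ?_, by simp⟩
        exact replicate_append_mem_countLang ha.1 (by simp [mem_starOf, hx, hc.1]) k₁
      · refine ⟨List.replicate k₂ b ++ [x, d], (hright _ _ _ (hdL' (by simp))).2 ?_, by simp⟩
        exact replicate_append_mem_countLang hb.2 (by simp [mem_starOf, hx, hd.1]) k₂
  -- `a^t c` lies only in the first language and `b^t d` only in the second
  have hinj : Function.Injective fun p : ℕ∞ × ℕ∞ =>
      op (countLang S' a p.1) (countLang S b p.2) := by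
    rintro ⟨r, s⟩ ⟨r', s'⟩ h
    have hac : ∀ r s (t : ℕ),
        List.replicate t a ++ [c] ∈ op (countLang S' a r) (countLang S b s) ↔ r ≤ t :=
      fun r s t => by
        rw [hleft _ _ _ (hcL (by simp))]
        exact replicate_append_mem_countLang_iff ha.1 (by simpa [mem_starOf] using hc.1)
          (by simpa using fun h : a = c => hc.2 (h ▸ ha.2))
    have hbd : ∀ r s (t : ℕ),
        List.replicate t b ++ [d] ∈ op (countLang S' a r) (countLang S b s) ↔ s ≤ t :=
      fun r s t => by
        rw [hright _ _ _ (hdL' (by simp))]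
        exact replicate_append_mem_countLang_iff hb.2 (by simpa [mem_starOf] using hd.1)
          (by simpa using fun h : b = d => hd.2 (h ▸ hb.1))
    simp only at h
    have hr : r = r' := ENat.eq_of_forall_le_natCast_iff fun t => by rw [← hac r s t, h, hac]
    have hs : s = s' := ENat.eq_of_forall_le_natCast_iff fun t => by rw [← hbd r s t, h, hbd]
    rw [hr, hs]
  have h := hasComplexity_op_countLang hop ha.2 hb.1 hab k₁ k₂ hA hinj.injOn
  rwa [image_countState_of_not_subset (Set.mem_union_left S ha.1) ha.1
      fun h => hd.2 (h (Or.inr hd.1)),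
    image_countState_of_not_subset (Set.mem_union_left S hb.1) hb.2
      fun h => hc.2 (h (Or.inl hc.1)),
    ENat.ncard_insert_top_natCast_Iic, ENat.ncard_insert_top_natCast_Iic] at h

theorem hasComplexity_countLang_sup (ha : a ∈ S' ∩ S) (hb : b ∈ S' ∩ S) (hab : a ≠ b)
    (hc : c ∈ S' \ S) (hd : d ∈ S \ S') (k₁ k₂ : ℕ) :
    HasComplexity (countLang S' a k₁ ⊔ countLang S b k₂) ((k₁ + 2) * (k₂ + 2)) :=
  hasComplexity_countLang_of_sup_like (op := (· ⊔ ·)) (fun _ _ _ => rfl) (fun _ _ => le_rfl)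
    (fun _ _ _ h => or_iff_left h) (fun _ _ _ h => or_iff_right h) ha hb hab hc hd k₁ k₂

theorem hasComplexity_countLang_symmDiff (ha : a ∈ S' ∩ S) (hb : b ∈ S' ∩ S) (hab : a ≠ b)
    (hc : c ∈ S' \ S) (hd : d ∈ S \ S') (k₁ k₂ : ℕ) :
    HasComplexity (symmDiff (countLang S' a k₁) (countLang S b k₂)) ((k₁ + 2) * (k₂ + 2)) :=
  hasComplexity_countLang_of_sup_like (op := symmDiff) (fun _ _ _ => rfl)
    (fun _ _ => symmDiff_le_sup) (fun _ _ _ h => Set.mem_symmDiff.trans (by tauto))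
    (fun _ _ _ h => Set.mem_symmDiff.trans (by tauto)) ha hb hab hc hd k₁ k₂

theorem hasComplexity_countLang_sdiff (ha : a ∈ S) (hb : b ∈ S) (hab : a ≠ b) (hSS' : S ⊆ S')
    (hc : c ∈ S' \ S) (k₁ k₂ : ℕ) :
    HasComplexity (countLang S' a k₁ \ countLang S b k₂) ((k₁ + 1) * (k₂ + 2)) := by
  have hS' : S' ∪ S = S' := Set.union_eq_left.2 hSS'
  have hcL : ∀ {w : List α} {s}, c ∈ w → w ∉ countLang S b s :=
    fun h => notMem_countLang h hc.2
  have hA : alphabetOf (countLang S' a k₁ \ countLang S b k₂) = S' ∪ S := by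
    rw [hS']
    refine alphabetOf_eq_of_forall (fun w hw => hw.1.1) fun x hx =>
      ⟨List.replicate k₁ a ++ [x, c], ⟨?_, hcL (by simp)⟩, by simp⟩
    exact replicate_append_mem_countLang (hSS' ha) (by simp [mem_starOf, hx, hc.1]) k₁
  -- `a^t c` reads off the first index `i`; then `b^t a^i` reads off the second
  have hinj : ((Nat.cast '' Set.Iic k₁ : Set ℕ∞) ×ˢ insert ⊤ (Nat.cast '' Set.Iic k₂)).InjOn
      fun p => countLang S' a p.1 \ countLang S b p.2 := by
    rintro ⟨_, s⟩ ⟨⟨i, -, rfl⟩, -⟩ ⟨_, s'⟩ ⟨⟨i', -, rfl⟩, -⟩ h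
    simp only at h
    have hac : ∀ r s (t : ℕ),
        List.replicate t a ++ [c] ∈ countLang S' a r \ countLang S b s ↔ r ≤ t := fun r s t =>
      (and_iff_left (hcL (by simp))).trans <| replicate_append_mem_countLang_iff (hSS' ha)
        (by simpa [mem_starOf] using hc.1) (by simpa using fun h : a = c => hc.2 (h ▸ ha))
    have hi : (i : ℕ∞) = i' :=
      ENat.eq_of_forall_le_natCast_iff fun t => by rw [← hac i s t, h, hac]
    rw [← hi] at h ⊢
    have hba : ∀ s (t : ℕ),
        List.replicate t b ++ List.replicate i a ∈ countLang S' a i \ countLang S b s ↔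
          ¬s ≤ t := fun s t => by
      have hw := append_mem_starOf.2 ⟨replicate_mem_starOf (hSS' hb) t,
        replicate_mem_starOf (hSS' ha) i⟩
      refine (and_iff_right ((mem_countLang_iff hw).2 (by simp))).trans
        (not_congr (replicate_append_mem_countLang_iff hb (replicate_mem_starOf ha i)
          fun h => hab (List.eq_of_mem_replicate h).symm))
    have hs : s = s' :=
      ENat.eq_of_forall_le_natCast_iff fun t => by rw [← not_iff_not, ← hba s t, h, hba]
    rw [hs]
  have h := hasComplexity_op_countLang (op := (· \ ·)) (fun _ _ _ => rfl) ha (hSS' hb) hab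
    k₁ k₂ hA
  rw [hS', image_countState_of_subset (hSS' ha) subset_rfl,
    image_countState_of_not_subset (hSS' hb) hb fun h => hc.2 (h hc.1),
    ENat.ncard_natCast_Iic, ENat.ncard_insert_top_natCast_Iic] at h
  exact h hinj

theorem hasComplexity_countLang_inf (ha : a ∈ S) (hb : b ∈ S) (hab : a ≠ b) (k₁ k₂ : ℕ) :
    HasComplexity (countLang S a k₁ ⊓ countLang S b k₂) ((k₁ + 1) * (k₂ + 1)) := by
  have hstar : ∀ i j, List.replicate i a ++ List.replicate j b ∈ starOf S := fun i j =>
    append_mem_starOf.2 ⟨replicate_mem_starOf ha i, replicate_mem_starOf hb j⟩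
  have hmem : ∀ (i j : ℕ) (r s : ℕ∞),
      List.replicate i a ++ List.replicate j b ∈ countLang S a r ⊓ countLang S b s ↔
        r ≤ i ∧ s ≤ j := fun i j r s =>
    and_congr
      ((mem_countLang_iff (hstar i j)).trans (by simp [List.count_replicate, hab.symm]))
      ((mem_countLang_iff (hstar i j)).trans (by simp [List.count_replicate, hab]))
  have hA : alphabetOf (countLang S a k₁ ⊓ countLang S b k₂) = S ∪ S := by
    rw [Set.union_self]
    refine alphabetOf_eq_of_forall (fun w hw => hw.1.1) fun x hx =>
      ⟨List.replicate k₁ a ++ List.replicate k₂ b ++ [x], ?_, by simp⟩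
    have hw := append_mem_starOf.2 ⟨hstar k₁ k₂, (by simpa [mem_starOf] : [x] ∈ starOf S)⟩
    exact ⟨(mem_countLang_iff hw).2 (by simp [List.count_append]),
      (mem_countLang_iff hw).2 (by simp [List.count_append, List.count_replicate, hab])⟩
  -- `a^i b^j` is the least word of the quotient with index `(i, j)`
  have hinj : ((Nat.cast '' Set.Iic k₁ : Set ℕ∞) ×ˢ (Nat.cast '' Set.Iic k₂)).InjOn
      fun p => countLang S a p.1 ⊓ countLang S b p.2 := by
    rintro ⟨_, _⟩ ⟨⟨i, -, rfl⟩, ⟨j, -, rfl⟩⟩ ⟨_, _⟩ ⟨⟨i', -, rfl⟩, ⟨j', -, rfl⟩⟩ h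
    simp only at h
    have h₁ := (hmem i j _ _).1 (h ▸ (hmem i j _ _).2 ⟨le_rfl, le_rfl⟩)
    have h₂ := (hmem i' j' _ _).1 (h.symm ▸ (hmem i' j' _ _).2 ⟨le_rfl, le_rfl⟩)
    exact Prod.ext (le_antisymm h₂.1 h₁.1) (le_antisymm h₂.2 h₁.2)
  have h := hasComplexity_op_countLang (op := (· ⊓ ·)) (fun _ _ _ => rfl) ha hb hab k₁ k₂ hA
  rw [Set.union_self, image_countState_of_subset ha subset_rfl,
    image_countState_of_subset hb subset_rfl, ENat.ncard_natCast_Iic,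
    ENat.ncard_natCast_Iic] at h
  exact h hinj

end CountLang

/-- two-sided ideals meeting the unrestricted bounds for the boolean
operations: `(m+1)(n+1)` for union and symmetric difference, `m·n + m` for
difference, and `m·n` for intersection. -/
theorem two_sided_ideal_boolean_tight (m n : ℕ) (hm : 5 ≤ m) (hn : 5 ≤ n) :
    (∃ L' L : Language (Fin 6), IsTwoSidedIdeal L' ∧ IsTwoSidedIdeal L ∧
      (alphabetOf L' \ alphabetOf L).Nonempty ∧
      (alphabetOf L \ alphabetOf L').Nonempty ∧
      HasComplexity L' m ∧ HasComplexity L n ∧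
      HasComplexity (L' ⊔ L) ((m + 1) * (n + 1)) ∧
      HasComplexity ((L' \ L) ⊔ (L \ L')) ((m + 1) * (n + 1))) ∧
    (∃ L' L : Language (Fin 6), IsTwoSidedIdeal L' ∧ IsTwoSidedIdeal L ∧
      (alphabetOf L' \ alphabetOf L).Nonempty ∧
      HasComplexity L' m ∧ HasComplexity L n ∧
      HasComplexity (L' \ L) (m * n + m)) ∧
    (∃ L' L : Language (Fin 6), IsTwoSidedIdeal L' ∧ IsTwoSidedIdeal L ∧
      HasComplexity L' m ∧ HasComplexity L n ∧
      HasComplexity (L' ⊓ L) (m * n)) := by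
  obtain ⟨k₁, rfl⟩ : ∃ k, m = k + 1 := ⟨m - 1, by omega⟩
  obtain ⟨k₂, rfl⟩ : ∃ k, n = k + 1 := ⟨n - 1, by omega⟩
  have h01 : (0 : Fin 6) ≠ 1 := by decide
  refine ⟨⟨countLang {0, 1, 2} 0 k₁, countLang {0, 1, 3} 1 k₂, ?_⟩,
    ⟨countLang {0, 1, 2} 0 k₁, countLang {0, 1} 1 k₂, ?_⟩,
    ⟨countLang {0, 1} 0 k₁, countLang {0, 1} 1 k₂, ?_⟩⟩
  · rw [alphabetOf_countLang (by simp), alphabetOf_countLang (by simp)]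
    exact ⟨isTwoSidedIdeal_countLang (by simp) k₁, isTwoSidedIdeal_countLang (by simp) k₂,
      ⟨2, by simp⟩, ⟨3, by simp⟩, hasComplexity_countLang (by simp) k₁,
      hasComplexity_countLang (by simp) k₂,
      hasComplexity_countLang_sup (c := 2) (d := 3) (by simp) (by simp) h01 (by simp)
        (by simp) k₁ k₂,
      hasComplexity_countLang_symmDiff (c := 2) (d := 3) (by simp) (by simp) h01 (by simp)
        (by simp) k₁ k₂⟩
  · rw [alphabetOf_countLang (by simp), alphabetOf_countLang (by simp),
      show (k₁ + 1) * (k₂ + 1) + (k₁ + 1) = (k₁ + 1) * (k₂ + 2) by ring]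
    exact ⟨isTwoSidedIdeal_countLang (by simp) k₁, isTwoSidedIdeal_countLang (by simp) k₂,
      ⟨2, by simp⟩, hasComplexity_countLang (by simp) k₁, hasComplexity_countLang (by simp) k₂,
      hasComplexity_countLang_sdiff (c := 2) (by simp) (by simp) h01 (by simp) (by simp) k₁ k₂⟩
  · exact ⟨isTwoSidedIdeal_countLang (by simp) k₁, isTwoSidedIdeal_countLang (by simp) k₂,
      hasComplexity_countLang (by simp) k₁, hasComplexity_countLang (by simp) k₂,
      hasComplexity_countLang_inf (by simp) (by simp) h01 k₁ k₂⟩
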